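/- arXiv:1204.4767 — 6 statements merged into one kernel-verified Lean document; each statement's English description precedes it below -/
import Mathlib

section
/- Let F₀ : [0,1] × [0,T] → [0,1] be continuous and define Fₖ₊₁(y,t) ≤ R ∫_y^1 ∫_0^t Fₖ(z,s) ds dz for continuous nonnegative functions Fₖ on [0,1] × [0,T] with 0 ≤ F₀ ≤ 1. Then 0 ≤ Fₖ(y,t) ≤ e^{2Rt} 2^{-k} for all y ∈ [0,1], t ∈ [0,T], and k ≥ 0. -/
open Set MeasureTheory

/-
Induction on k. If Fₖ(z,s) ≤ e^{2Rs} 2^{-k}, then integrating in s over [0,t] gives at most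
(e^{2Rt} - 1) / (2R 2^k), and integrating in z over [y,1] ⊆ [0,1] does not increase this bound;
multiplying by R yields Fₖ₊₁(y,t) ≤ e^{2Rt} 2^{-(k+1)}.
-/

/-- No integrability of `f` is needed: if `f` is not integrable its integral is `0 ≤ ∫ g`. -/
theorem intervalIntegral_le_of_nonneg_of_le {f g : ℝ → ℝ} {a b : ℝ} (hab : a ≤ b)
    (hf : ∀ x ∈ Icc a b, 0 ≤ f x) (hg : IntervalIntegrable g volume a b)
    (hfg : ∀ x ∈ Icc a b, f x ≤ g x) :
    ∫ x in a..b, f x ≤ ∫ x in a..b, g x := by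
  rw [intervalIntegral.integral_of_le hab, intervalIntegral.integral_of_le hab]
  refine integral_mono_of_nonneg ?_ hg.1 ?_ <;>
    filter_upwards [ae_restrict_mem measurableSet_Ioc] with x hx
  · exact hf x (Ioc_subset_Icc_self hx)
  · exact hfg x (Ioc_subset_Icc_self hx)

theorem integral_exp_const_mul {c : ℝ} (hc : c ≠ 0) (t : ℝ) :
    ∫ s in (0:ℝ)..t, Real.exp (c * s) = (Real.exp (c * t) - 1) / c := by
  rw [intervalIntegral.integral_comp_mul_left (f := Real.exp) hc, mul_zero, integral_exp,
    Real.exp_zero, smul_eq_mul, inv_mul_eq_div]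

theorem integral_integral_le_of_le_mul_exp {G : ℝ → ℝ → ℝ} {a b t c M : ℝ}
    (hab : a ≤ b) (ht : 0 ≤ t) (hc : c ≠ 0)
    (hG₀ : ∀ z ∈ Icc a b, ∀ s ∈ Icc 0 t, 0 ≤ G z s)
    (hG : ∀ z ∈ Icc a b, ∀ s ∈ Icc 0 t, G z s ≤ M * Real.exp (c * s)) :
    ∫ z in a..b, ∫ s in (0:ℝ)..t, G z s ≤ (b - a) * (M * ((Real.exp (c * t) - 1) / c)) := by
  have hinner : ∀ z ∈ Icc a b, ∫ s in (0:ℝ)..t, G z s ≤ M * ((Real.exp (c * t) - 1) / c) := by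
    intro z hz
    calc ∫ s in (0:ℝ)..t, G z s ≤ ∫ s in (0:ℝ)..t, M * Real.exp (c * s) :=
          intervalIntegral_le_of_nonneg_of_le ht (hG₀ z hz)
            (by apply Continuous.intervalIntegrable; fun_prop) (hG z hz)
      _ = M * ((Real.exp (c * t) - 1) / c) := by
          rw [intervalIntegral.integral_const_mul, integral_exp_const_mul hc]
  calc ∫ z in a..b, ∫ s in (0:ℝ)..t, G z s
      ≤ ∫ _ in a..b, M * ((Real.exp (c * t) - 1) / c) :=
        intervalIntegral_le_of_nonneg_of_le hab
          (fun z hz => intervalIntegral.integral_nonneg ht (hG₀ z hz))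
          intervalIntegrable_const hinner
    _ = (b - a) * (M * ((Real.exp (c * t) - 1) / c)) := by
        rw [intervalIntegral.integral_const, smul_eq_mul]

theorem stmt_1_general (T R : ℝ) (hR : 0 < R) (F : ℕ → ℝ → ℝ → ℝ)
    (hnonneg : ∀ k, ∀ y ∈ Icc (0:ℝ) 1, ∀ t ∈ Icc (0:ℝ) T, 0 ≤ F k y t)
    (hF0 : ∀ y ∈ Icc (0:ℝ) 1, ∀ t ∈ Icc (0:ℝ) T, F 0 y t ≤ 1)
    (hrec : ∀ k, ∀ y ∈ Icc (0:ℝ) 1, ∀ t ∈ Icc (0:ℝ) T,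
      F (k+1) y t ≤ R * ∫ z in y..(1:ℝ), ∫ s in (0:ℝ)..t, F k z s) :
    ∀ k, ∀ y ∈ Icc (0:ℝ) 1, ∀ t ∈ Icc (0:ℝ) T,
      0 ≤ F k y t ∧ F k y t ≤ Real.exp (2 * R * t) / 2 ^ k := by
  suffices h : ∀ k, ∀ y ∈ Icc (0:ℝ) 1, ∀ t ∈ Icc (0:ℝ) T,
      F k y t ≤ (2 ^ k)⁻¹ * Real.exp (2 * R * t) by
    intro k y hy t ht
    exact ⟨hnonneg k y hy t ht, (h k y hy t ht).trans_eq (inv_mul_eq_div _ _)⟩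
  intro k
  induction k with
  | zero =>
    intro y hy t ht
    simpa using (hF0 y hy t ht).trans (Real.one_le_exp (by nlinarith [ht.1]))
  | succ k ih =>
    intro y hy t ht
    have hIcc : Icc y 1 ⊆ Icc 0 1 := Icc_subset_Icc_left hy.1
    have hIcc' : Icc 0 t ⊆ Icc 0 T := Icc_subset_Icc_right ht.2
    have hint := integral_integral_le_of_le_mul_exp hy.2 ht.1 (by positivity : 2 * R ≠ 0)
      (fun z hz s hs => hnonneg k z (hIcc hz) s (hIcc' hs))
      (fun z hz s hs => ih z (hIcc hz) s (hIcc' hs))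
    calc F (k + 1) y t ≤ R * ∫ z in y..(1:ℝ), ∫ s in (0:ℝ)..t, F k z s := hrec k y hy t ht
      _ ≤ R * ((1 - y) * ((2 ^ k)⁻¹ * ((Real.exp (2 * R * t) - 1) / (2 * R)))) := by gcongr
      _ = (1 - y) * (2 ^ (k + 1))⁻¹ * (Real.exp (2 * R * t) - 1) := by
          field_simp; ring
      _ ≤ 1 * (2 ^ (k + 1))⁻¹ * Real.exp (2 * R * t) := by
          gcongr <;> linarith [hy.1, Real.one_le_exp (by nlinarith [ht.1] : 0 ≤ 2 * R * t)]
      _ = (2 ^ (k + 1))⁻¹ * Real.exp (2 * R * t) := by rw [one_mul]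

theorem stmt_1 (T R : ℝ) (hT : 0 < T) (hR : 0 < R) (F : ℕ → ℝ → ℝ → ℝ)
    (hcont : ∀ k, ContinuousOn (fun p : ℝ × ℝ => F k p.1 p.2) (Icc 0 1 ×ˢ Icc 0 T))
    (hnonneg : ∀ k, ∀ y ∈ Icc (0:ℝ) 1, ∀ t ∈ Icc (0:ℝ) T, 0 ≤ F k y t)
    (hF0 : ∀ y ∈ Icc (0:ℝ) 1, ∀ t ∈ Icc (0:ℝ) T, F 0 y t ≤ 1)
    (hrec : ∀ k, ∀ y ∈ Icc (0:ℝ) 1, ∀ t ∈ Icc (0:ℝ) T,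
      F (k+1) y t ≤ R * ∫ z in y..(1:ℝ), ∫ s in (0:ℝ)..t, F k z s) :
    ∀ k, ∀ y ∈ Icc (0:ℝ) 1, ∀ t ∈ Icc (0:ℝ) T,
      0 ≤ F k y t ∧ F k y t ≤ Real.exp (2 * R * t) / 2 ^ k :=
  stmt_1_general T R hR F hnonneg hF0 hrec
end

section
/- Under the assumptions of the existence theorem for f, the unique solution f satisfies ∂f/∂y(y,t) ≥ e^{−T R(T)} > 0 for all (y,t) ∈ [0,1] × [0,T], where R(T) is the uniform bound on w and |∂w/∂y| over W and [0,1]×[0,T]. In particular f(·,t) is strictly increasing in y. -/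
/-!
Write `S_i(z,t) = exp (-∫₀ᵗ w_i(f(z,s),s) ds)` and `G_i(y,t) = ∫_y^1 ∂ρ_i/∂z · S_i(z,t) dz`, so
that `f(y,t) = 1 + ∫ G_i(y,t) dλ`. On `[0,T]` we have `S_i ≥ e^{-TR}`, and `∂ρ_i/∂z ≤ 0`, hence
for `y ≤ y'`
`G_i(y',t) - G_i(y,t) = -∫_y^{y'} ∂ρ_i/∂z · S_i ≥ e^{-TR} (ρ_i(y) - ρ_i(y'))`.
Integrating over `λ` with `∫ ρ_i(y) dλ = 1 - y` gives `f(y',t) - f(y,t) ≥ e^{-TR} (y' - y)`,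
i.e. `y ↦ f(y,t) - e^{-TR} y` is monotone, which yields both conclusions.

No measurability in `i` is assumed, so integrability of `i ↦ G_i(y,t)` has to be earned. Where it
fails, the Bochner integral is `0` and `f(y,t) = 1`; where it holds, the estimate with `y' = 1`
gives `f(y,t) ≤ 1 - e^{-TR} (1 - y) < 1` for `y < 1`. At `t = 0` it is integrable
(`G_i(y,0) = -ρ_i(y)`), and `f(y,·)` is continuous, so it cannot jump to the value `1`.
-/

open Set MeasureTheory

theorem le_of_continuousOn_of_forall_le_or_eq {g : ℝ → ℝ} {a b m M : ℝ} (hab : a ≤ b)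
    (hg : ContinuousOn g (Icc a b)) (hmM : m < M) (ha : g a ≤ m)
    (h : ∀ s ∈ Icc a b, g s ≤ m ∨ g s = M) : g b ≤ m := by
  by_contra! hb
  have hgb : g b = M := (h b (right_mem_Icc.2 hab)).resolve_left hb.not_ge
  obtain ⟨s, hs, hgs⟩ : (m + M) / 2 ∈ g '' Icc a b :=
    intermediate_value_Icc hab hg ⟨by linarith, by linarith⟩
  rcases h s hs with h | h <;> linarith

theorem continuousOn_parametric_intervalIntegral_of_continuousOn {X : Type*} [TopologicalSpace X]
    {F : X → ℝ → ℝ} {K : Set X} {a b : ℝ} (hab : a ≤ b)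
    (hF : ContinuousOn (Function.uncurry F) (K ×ˢ Icc a b)) :
    ContinuousOn (fun x => ∫ s in a..b, F x s) K := by
  rw [continuousOn_iff_continuous_domRestrict]
  have hcont : Continuous (Function.uncurry fun (x : K) (s : ℝ) => F x (projIcc a b hab s)) :=
    hF.comp_continuous (f := fun p : K × ℝ => ((p.1 : X), (projIcc a b hab p.2 : ℝ)))
      (by fun_prop) fun p => ⟨p.1.2, (projIcc a b hab p.2).2⟩
  refine (intervalIntegral.continuous_parametric_intervalIntegral_of_continuous' hcont a b).congr
    fun x => intervalIntegral.integral_congr fun s hs => ?_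
  rw [uIcc_of_le hab] at hs
  simp [projIcc_of_mem hab hs]

theorem intervalIntegral_mul_le_mul_sub {ρ r E : ℝ → ℝ} {a b c : ℝ} (hab : a ≤ b)
    (hρ : ∀ z ∈ Icc a b, HasDerivAt ρ (r z) z) (hr : ContinuousOn r (Icc a b))
    (hE : ContinuousOn E (Icc a b)) (hr_nonpos : ∀ z ∈ Icc a b, r z ≤ 0)
    (hcE : ∀ z ∈ Icc a b, c ≤ E z) :
    ∫ z in a..b, r z * E z ≤ c * (ρ b - ρ a) := by
  have hr_int : IntervalIntegrable r volume a b := hr.intervalIntegrable_of_Icc hab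
  calc ∫ z in a..b, r z * E z ≤ ∫ z in a..b, r z * c :=
        intervalIntegral.integral_mono_on hab ((hr.mul hE).intervalIntegrable_of_Icc hab)
          (hr_int.mul_const c) fun z hz => mul_le_mul_of_nonpos_left (hcE z hz) (hr_nonpos z hz)
    _ = c * (ρ b - ρ a) := by
      rw [intervalIntegral.integral_mul_const, mul_comm,
        intervalIntegral.integral_eq_sub_of_hasDerivAt (by rwa [uIcc_of_le hab]) hr_int]

theorem mul_sub_le_intervalIntegral_sub {ρ r E : ℝ → ℝ} {a b c y y' : ℝ}
    (hρ : ∀ z ∈ Icc a b, HasDerivAt ρ (r z) z) (hr : ContinuousOn r (Icc a b))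
    (hE : ContinuousOn E (Icc a b)) (hr_nonpos : ∀ z ∈ Icc a b, r z ≤ 0)
    (hcE : ∀ z ∈ Icc a b, c ≤ E z) (hy : y ∈ Icc a b) (hy' : y' ∈ Icc a b)
    (hyy' : y ≤ y') :
    c * (ρ y - ρ y') ≤ (∫ z in y'..b, r z * E z) - ∫ z in y..b, r z * E z := by
  have hsub : Icc y y' ⊆ Icc a b := Icc_subset_Icc hy.1 hy'.2
  have hint : ∀ u ∈ Icc a b, ∀ v ∈ Icc a b,
      IntervalIntegrable (fun z => r z * E z) volume u v :=
    fun u hu v hv => ((hr.mul hE).mono (uIcc_subset_Icc hu hv)).intervalIntegrable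
  have hsplit := intervalIntegral.integral_add_adjacent_intervals (hint y hy y' hy')
    (hint y' hy' b (right_mem_Icc.2 (hy.1.trans hy.2)))
  have hle := intervalIntegral_mul_le_mul_sub hyy' (fun z hz => hρ z (hsub hz)) (hr.mono hsub)
    (hE.mono hsub) (fun z hz => hr_nonpos z (hsub hz)) fun z hz => hcE z (hsub hz)
  linarith

theorem le_of_hasDerivAt_of_monotoneOn_sub_mul {g : ℝ → ℝ} {g' a b c x : ℝ} (hab : a < b)
    (hx : x ∈ Icc a b) (hg : HasDerivAt g g' x)
    (hmono : MonotoneOn (fun y => g y - c * y) (Icc a b)) : c ≤ g' := by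
  have hd : HasDerivAt (fun y => g y - c * y) (g' - c) x := by
    have := hg.sub ((hasDerivAt_id x).const_mul c)
    rwa [mul_one] at this
  have := hmono.derivWithin_nonneg (x := x)
  rw [hd.hasDerivWithinAt.derivWithin (uniqueDiffOn_Icc hab x hx)] at this
  linarith

theorem StrictMonoOn.of_monotoneOn_sub_mul {g : ℝ → ℝ} {c : ℝ} {s : Set ℝ} (hc : 0 < c)
    (hmono : MonotoneOn (fun y => g y - c * y) s) : StrictMonoOn g s := by
  simpa using ((strictMono_mul_left_of_pos hc).strictMonoOn s).add_monotone hmono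

section Mass

variable {W : Type*} [MeasurableSpace W] {lam : Measure W} {ρ : W → ℝ → ℝ}

theorem integrable_of_integral_eq_one_sub
    (hmass : ∀ y ∈ Icc (0:ℝ) 1, ∫ i, ρ i y ∂lam = 1 - y)
    (hρ1 : ∀ i, ρ i 1 = 0) {y : ℝ} (hy : y ∈ Icc (0:ℝ) 1) : Integrable (ρ · y) lam := by
  rcases hy.2.lt_or_eq with hy1 | rfl
  · by_contra hint
    have := hmass y hy
    rw [integral_undef hint] at this
    linarith
  · simp [hρ1]

theorem mul_sub_le_integral_sub (hmass : ∀ y ∈ Icc (0:ℝ) 1, ∫ i, ρ i y ∂lam = 1 - y)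
    (hρ1 : ∀ i, ρ i 1 = 0) {G : W → ℝ → ℝ} {c y y' : ℝ} (hy : y ∈ Icc (0:ℝ) 1)
    (hy' : y' ∈ Icc (0:ℝ) 1) (hG : ∀ i, c * (ρ i y - ρ i y') ≤ G i y' - G i y)
    (hint : Integrable (G · y) lam) (hint' : Integrable (G · y') lam) :
    c * (y' - y) ≤ ∫ i, G i y' ∂lam - ∫ i, G i y ∂lam := by
  have hρ := integrable_of_integral_eq_one_sub hmass hρ1 hy
  have hρ' := integrable_of_integral_eq_one_sub hmass hρ1 hy'
  calc c * (y' - y) = ∫ i, c * (ρ i y - ρ i y') ∂lam := by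
        rw [integral_const_mul, integral_sub hρ hρ', hmass y hy, hmass y' hy']
        ring
    _ ≤ ∫ i, (G i y' - G i y) ∂lam :=
        integral_mono ((hρ.sub hρ').const_mul c) (hint'.sub hint) hG
    _ = ∫ i, G i y' ∂lam - ∫ i, G i y ∂lam := integral_sub hint' hint

theorem integrable_of_continuousOn_one_add_integral
    (hmass : ∀ y ∈ Icc (0:ℝ) 1, ∫ i, ρ i y ∂lam = 1 - y)
    (hρ1 : ∀ i, ρ i 1 = 0) {G : W → ℝ → ℝ → ℝ} {F : ℝ → ℝ} {c T y t : ℝ} (hc : 0 < c)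
    (hG : ∀ s ∈ Icc (0:ℝ) T, ∀ i, c * (ρ i y - ρ i 1) ≤ G i 1 s - G i y s)
    (hG1 : ∀ i t, G i 1 t = 0) (hG0 : Integrable (G · y 0) lam)
    (hF : ∀ t ∈ Icc (0:ℝ) T, F t = 1 + ∫ i, G i y t ∂lam) (hFc : ContinuousOn F (Icc 0 T))
    (hy : y ∈ Icc (0:ℝ) 1) (ht : t ∈ Icc (0:ℝ) T) : Integrable (G · y t) lam := by
  have hint1 : ∀ t, Integrable (G · 1 t) lam := fun t => by simp [hG1]
  have hbound : ∀ s ∈ Icc (0:ℝ) T, Integrable (G · y s) lam → F s ≤ 1 - c * (1 - y) := by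
    intro s hs hint
    have := mul_sub_le_integral_sub (G := fun i y => G i y s) hmass hρ1 hy
      (right_mem_Icc.2 zero_le_one) (hG s hs) hint (hint1 s)
    simp only [hG1, integral_zero] at this
    rw [hF s hs]
    linarith
  have hjunk : ∀ s ∈ Icc (0:ℝ) T, ¬Integrable (G · y s) lam → F s = 1 :=
    fun s hs hint => by rw [hF s hs, integral_undef hint, add_zero]
  rcases hy.2.lt_or_eq with hy1 | rfl
  · by_contra hint
    have hsub : Icc 0 t ⊆ Icc 0 T := Icc_subset_Icc_right ht.2
    have hle : F t ≤ 1 - c * (1 - y) :=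
      le_of_continuousOn_of_forall_le_or_eq ht.1 (hFc.mono hsub) (by nlinarith : _ < (1:ℝ))
        (hbound 0 (hsub (left_mem_Icc.2 ht.1)) hG0) fun s hs =>
          (em _).imp (hbound s (hsub hs)) (hjunk s (hsub hs))
    have := hjunk t ht hint
    nlinarith
  · exact hint1 t

theorem monotoneOn_sub_mul_of_eq_one_add_integral
    (hmass : ∀ y ∈ Icc (0:ℝ) 1, ∫ i, ρ i y ∂lam = 1 - y) (hρ1 : ∀ i, ρ i 1 = 0)
    {G : W → ℝ → ℝ} {F : ℝ → ℝ} {c : ℝ}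
    (hG : ∀ y ∈ Icc (0:ℝ) 1, ∀ y' ∈ Icc (0:ℝ) 1, y ≤ y' →
      ∀ i, c * (ρ i y - ρ i y') ≤ G i y' - G i y)
    (hint : ∀ y ∈ Icc (0:ℝ) 1, Integrable (G · y) lam)
    (hF : ∀ y ∈ Icc (0:ℝ) 1, F y = 1 + ∫ i, G i y ∂lam) :
    MonotoneOn (fun y => F y - c * y) (Icc 0 1) := by
  intro y hy y' hy' hyy'
  have := mul_sub_le_integral_sub hmass hρ1 hy hy' (hG y hy y' hy' hyy') (hint y hy) (hint y' hy')
  dsimp only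
  rw [hF y hy, hF y' hy']
  linarith

end Mass

noncomputable def survival (u f : ℝ → ℝ → ℝ) (z t : ℝ) : ℝ :=
  Real.exp (-∫ s in (0:ℝ)..t, u (f z s) s)

noncomputable def survivalIntegral (r : ℝ → ℝ) (u f : ℝ → ℝ → ℝ) (y t : ℝ) : ℝ :=
  ∫ z in y..1, r z * survival u f z t

section Survival

variable {u f : ℝ → ℝ → ℝ}

theorem continuousOn_hazard (hu : Continuous fun p : ℝ × ℝ => u p.1 p.2)
    (hf : ContinuousOn (fun p : ℝ × ℝ => f p.1 p.2) (Icc 0 1 ×ˢ Ici 0)) :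
    ContinuousOn (fun p : ℝ × ℝ => u (f p.1 p.2) p.2) (Icc 0 1 ×ˢ Ici 0) :=
  hu.comp_continuousOn (hf.prodMk continuousOn_snd)

theorem continuousOn_survival (hu : Continuous fun p : ℝ × ℝ => u p.1 p.2)
    (hf : ContinuousOn (fun p : ℝ × ℝ => f p.1 p.2) (Icc 0 1 ×ˢ Ici 0)) {t : ℝ} (ht : 0 ≤ t) :
    ContinuousOn (survival u f · t) (Icc 0 1) :=
  Real.continuous_exp.comp_continuousOn <| ContinuousOn.neg <|
    continuousOn_parametric_intervalIntegral_of_continuousOn ht <|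
      (continuousOn_hazard hu hf).mono (prod_mono_right Icc_subset_Ici_self)

theorem exp_neg_mul_le_survival (hu : Continuous fun p : ℝ × ℝ => u p.1 p.2)
    (hf : ContinuousOn (fun p : ℝ × ℝ => f p.1 p.2) (Icc 0 1 ×ˢ Ici 0))
    (hf_range : ∀ y ∈ Icc (0:ℝ) 1, ∀ t ∈ Ici (0:ℝ), f y t ∈ Icc (0:ℝ) 1)
    {T R z t : ℝ} (hR : 0 ≤ R) (hu_le : ∀ y ∈ Icc (0:ℝ) 1, ∀ t ∈ Icc (0:ℝ) T, u y t ≤ R)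
    (hz : z ∈ Icc (0:ℝ) 1) (ht : t ∈ Icc (0:ℝ) T) :
    Real.exp (-(T * R)) ≤ survival u f z t := by
  have hcont : ContinuousOn (fun s => u (f z s) s) (Icc 0 t) :=
    (continuousOn_hazard hu hf).comp (f := fun s => (z, s))
      (Continuous.continuousOn (by fun_prop))
      fun s (hs : s ∈ Icc 0 t) => ⟨hz, hs.1⟩
  refine Real.exp_le_exp.2 (neg_le_neg ?_)
  calc ∫ s in (0:ℝ)..t, u (f z s) s ≤ ∫ _ in (0:ℝ)..t, R :=
        intervalIntegral.integral_mono_on ht.1 (hcont.intervalIntegrable_of_Icc ht.1)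
          intervalIntegrable_const fun s hs =>
            hu_le _ (hf_range z hz s hs.1) s ⟨hs.1, hs.2.trans ht.2⟩
    _ = t * R := by simp
    _ ≤ T * R := mul_le_mul_of_nonneg_right ht.2 hR

variable {r ρ : ℝ → ℝ}

theorem survivalIntegral_one (t : ℝ) : survivalIntegral r u f 1 t = 0 :=
  intervalIntegral.integral_same

theorem survivalIntegral_time_zero {y : ℝ} (hρ : ∀ z ∈ uIcc y 1, HasDerivAt ρ (r z) z)
    (hr : IntervalIntegrable r volume y 1) : survivalIntegral r u f y 0 = ρ 1 - ρ y := by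
  simp only [survivalIntegral, survival, intervalIntegral.integral_same, neg_zero, Real.exp_zero,
    mul_one, intervalIntegral.integral_eq_sub_of_hasDerivAt hρ hr]

theorem mul_sub_le_survivalIntegral_sub (hu : Continuous fun p : ℝ × ℝ => u p.1 p.2)
    (hf : ContinuousOn (fun p : ℝ × ℝ => f p.1 p.2) (Icc 0 1 ×ˢ Ici 0))
    (hf_range : ∀ y ∈ Icc (0:ℝ) 1, ∀ t ∈ Ici (0:ℝ), f y t ∈ Icc (0:ℝ) 1)
    {T R y y' t : ℝ} (hR : 0 ≤ R) (hu_le : ∀ y ∈ Icc (0:ℝ) 1, ∀ t ∈ Icc (0:ℝ) T, u y t ≤ R)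
    (hρ : ∀ z ∈ Icc (0:ℝ) 1, HasDerivAt ρ (r z) z) (hr : ContinuousOn r (Icc 0 1))
    (hr_nonpos : ∀ z ∈ Icc (0:ℝ) 1, r z ≤ 0) (ht : t ∈ Icc (0:ℝ) T)
    (hy : y ∈ Icc (0:ℝ) 1) (hy' : y' ∈ Icc (0:ℝ) 1) (hyy' : y ≤ y') :
    Real.exp (-(T * R)) * (ρ y - ρ y') ≤
      survivalIntegral r u f y' t - survivalIntegral r u f y t :=
  mul_sub_le_intervalIntegral_sub hρ hr (continuousOn_survival hu hf ht.1) hr_nonpos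
    (fun _ hz => exp_neg_mul_le_survival hu hf hf_range hR hu_le hz ht) hy hy' hyy'

end Survival

theorem stmt_5_general {W : Type*} [MeasurableSpace W] (lam : Measure W)
    (T R : ℝ) (hT : 0 < T)
    (w wy : W → ℝ → ℝ → ℝ)
    (hw_cont : ∀ i, Continuous fun p : ℝ × ℝ => w i p.1 p.2)
    (hRbd : ∀ i, ∀ y ∈ Icc (0:ℝ) 1, ∀ t ∈ Icc (0:ℝ) T,
      max (w i y t) |wy i y t| ≤ R)
    (ρ ρy : W → ℝ → ℝ)
    (hρ_deriv : ∀ i y, HasDerivAt (ρ i) (ρy i y) y)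
    (hρy_cont : ∀ i, Continuous (ρy i))
    (hρy_nonpos : ∀ i, ∀ y ∈ Icc (0:ℝ) 1, ρy i y ≤ 0)
    (hρ1 : ∀ i, ρ i 1 = 0)
    (hmass : ∀ y ∈ Icc (0:ℝ) 1, ∫ i, ρ i y ∂lam = 1 - y)
    (f fy : ℝ → ℝ → ℝ)
    (hf_cont : ContinuousOn (fun p : ℝ × ℝ => f p.1 p.2) (Icc 0 1 ×ˢ Ici 0))
    (hf_range : ∀ y ∈ Icc (0:ℝ) 1, ∀ t ∈ Ici (0:ℝ), f y t ∈ Icc (0:ℝ) 1)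
    (hfy : ∀ t ∈ Icc (0:ℝ) T, ∀ y ∈ Icc (0:ℝ) 1,
      HasDerivAt (fun y => f y t) (fy y t) y)
    (hf_eq : ∀ y ∈ Icc (0:ℝ) 1, ∀ t ∈ Ici (0:ℝ),
      f y t = 1 + ∫ i, (∫ z in y..(1:ℝ), ρy i z *
        Real.exp (-∫ s in (0:ℝ)..t, w i (f z s) s)) ∂lam) :
    (∀ y ∈ Icc (0:ℝ) 1, ∀ t ∈ Icc (0:ℝ) T, Real.exp (-(T * R)) ≤ fy y t) ∧
    (0 < Real.exp (-(T * R))) ∧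
    (∀ t ∈ Icc (0:ℝ) T, StrictMonoOn (fun y => f y t) (Icc 0 1)) := by
  have h01 : (0:ℝ) ∈ Icc (0:ℝ) 1 := left_mem_Icc.2 zero_le_one
  obtain ⟨i₀⟩ : Nonempty W := by
    by_contra! hW
    simpa [integral_of_isEmpty] using hmass 0 h01
  have hR : 0 ≤ R := (abs_nonneg _).trans <|
    (le_max_right _ _).trans (hRbd i₀ 0 h01 0 (left_mem_Icc.2 hT.le))
  set c := Real.exp (-(T * R))
  set G : W → ℝ → ℝ → ℝ := fun i => survivalIntegral (ρy i) (w i) f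
  have hF : ∀ y ∈ Icc (0:ℝ) 1, ∀ t ∈ Icc (0:ℝ) T, f y t = 1 + ∫ i, G i y t ∂lam :=
    fun y hy t ht => hf_eq y hy t ht.1
  have hG : ∀ t ∈ Icc (0:ℝ) T, ∀ y ∈ Icc (0:ℝ) 1, ∀ y' ∈ Icc (0:ℝ) 1, y ≤ y' →
      ∀ i, c * (ρ i y - ρ i y') ≤ G i y' t - G i y t := fun t ht y hy y' hy' hyy' i =>
    mul_sub_le_survivalIntegral_sub (hw_cont i) hf_cont hf_range hR
      (fun y hy t ht => (le_max_left _ _).trans (hRbd i y hy t ht)) (fun z _ => hρ_deriv i z)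
      (hρy_cont i).continuousOn (hρy_nonpos i) ht hy hy' hyy'
  have hint : ∀ t ∈ Icc (0:ℝ) T, ∀ y ∈ Icc (0:ℝ) 1, Integrable (G · y t) lam := by
    intro t ht y hy
    have hG0 : (G · y 0) = fun i => -ρ i y := funext fun i => by
      show survivalIntegral _ _ _ y 0 = _
      rw [survivalIntegral_time_zero (fun z _ => hρ_deriv i z)
        ((hρy_cont i).intervalIntegrable y 1), hρ1, zero_sub]
    exact integrable_of_continuousOn_one_add_integral hmass hρ1 (F := (f y ·)) (Real.exp_pos _)
      (fun s hs => hG s hs y hy 1 (right_mem_Icc.2 zero_le_one) hy.2)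
      (fun i => survivalIntegral_one)
      (hG0 ▸ (integrable_of_integral_eq_one_sub hmass hρ1 hy).neg)
      (hF y hy) (hf_cont.comp (f := fun s => (y, s)) (Continuous.continuousOn (by fun_prop))
        fun s (hs : s ∈ Icc 0 T) => ⟨hy, hs.1⟩) hy ht
  have hmono : ∀ t ∈ Icc (0:ℝ) T, MonotoneOn (fun y => f y t - c * y) (Icc 0 1) := fun t ht =>
    monotoneOn_sub_mul_of_eq_one_add_integral hmass hρ1 (hG t ht) (hint t ht)
      fun y hy => hF y hy t ht
  exact ⟨fun y hy t ht => le_of_hasDerivAt_of_monotoneOn_sub_mul zero_lt_one hy (hfy t ht y hy)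
      (hmono t ht), Real.exp_pos _,
    fun t ht => StrictMonoOn.of_monotoneOn_sub_mul (Real.exp_pos _) (hmono t ht)⟩

theorem stmt_5 {W : Type*} [MeasurableSpace W] (lam : Measure W)
    [IsProbabilityMeasure lam] (T R : ℝ) (hT : 0 < T)
    (w wy : W → ℝ → ℝ → ℝ)
    (hw_nonneg : ∀ i y t, 0 ≤ w i y t)
    (hw_deriv : ∀ i t y, HasDerivAt (fun y => w i y t) (wy i y t) y)
    (hw_cont : ∀ i, Continuous fun p : ℝ × ℝ => w i p.1 p.2)
    (hRbd : ∀ i, ∀ y ∈ Icc (0:ℝ) 1, ∀ t ∈ Icc (0:ℝ) T,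
      max (w i y t) |wy i y t| ≤ R)
    (ρ ρy : W → ℝ → ℝ)
    (hρ_deriv : ∀ i y, HasDerivAt (ρ i) (ρy i y) y)
    (hρy_cont : ∀ i, Continuous (ρy i))
    (hρy_nonpos : ∀ i, ∀ y ∈ Icc (0:ℝ) 1, ρy i y ≤ 0)
    (hρ0 : ∀ i, ρ i 0 = 1) (hρ1 : ∀ i, ρ i 1 = 0)
    (hmass : ∀ y ∈ Icc (0:ℝ) 1, ∫ i, ρ i y ∂lam = 1 - y)
    (f fy : ℝ → ℝ → ℝ)
    (hf_cont : ContinuousOn (fun p : ℝ × ℝ => f p.1 p.2) (Icc 0 1 ×ˢ Ici 0))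
    (hf_range : ∀ y ∈ Icc (0:ℝ) 1, ∀ t ∈ Ici (0:ℝ), f y t ∈ Icc (0:ℝ) 1)
    (hfy : ∀ t ∈ Icc (0:ℝ) T, ∀ y ∈ Icc (0:ℝ) 1,
      HasDerivAt (fun y => f y t) (fy y t) y)
    (hf_eq : ∀ y ∈ Icc (0:ℝ) 1, ∀ t ∈ Ici (0:ℝ),
      f y t = 1 + ∫ i, (∫ z in y..(1:ℝ), ρy i z *
        Real.exp (-∫ s in (0:ℝ)..t, w i (f z s) s)) ∂lam) :
    (∀ y ∈ Icc (0:ℝ) 1, ∀ t ∈ Icc (0:ℝ) T, Real.exp (-(T * R)) ≤ fy y t) ∧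
    (0 < Real.exp (-(T * R))) ∧
    (∀ t ∈ Icc (0:ℝ) T, StrictMonoOn (fun y => f y t) (Icc 0 1)) :=
  stmt_5_general lam T R hT w wy hw_cont hRbd ρ ρy hρ_deriv hρy_cont hρy_nonpos hρ1 hmass f fy
    hf_cont hf_range hfy hf_eq
end

section
/- Under the assumptions of the existence theorem for f, the unique solution f satisfies ∂f/∂t(y,t) ≥ 0 for all (y,t) ∈ [0,1]×[0,∞), i.e., the characteristic curves started from the initial line are nondecreasing in time. -/
/-!
Writing `g i s = ∫_y^1 ∂ρ/∂z(i,z) exp(-∫_0^s w(i, f(z,u), u) du) dz`, the fixed-point equation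
says `f(y,s) = 1 + ∫ g i s dλ(i)`. Since `w ≥ 0`, the exponential decreases in `s`, and since
`∂ρ/∂z ≤ 0`, each `g i` is nondecreasing. Integrating over `λ` keeps `f(y,·)` nondecreasing, so
its time derivative is nonnegative.
-/

open Set MeasureTheory Function

theorem monotoneOn_of_continuousOn_of_le_of_ne_zero {φ : ℝ → ℝ} {s : Set ℝ} (hs : s.OrdConnected)
    (hφ : ContinuousOn φ s) (h : ∀ a ∈ s, ∀ b ∈ s, a ≤ b → φ a ≠ 0 → φ b ≠ 0 → φ a ≤ φ b) :
    MonotoneOn φ s := by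
  intro a ha b hb hab
  by_contra! hlt
  -- If `φ a` or `φ b` vanishes, the IVT yields a point between them where `h` does apply.
  have hivt := intermediate_value_Icc' hab (hφ.mono (hs.out ha hb))
  by_cases ha0 : φ a = 0
  · obtain ⟨c, hc, hφc⟩ := hivt (⟨by linarith, by linarith⟩ : φ b / 2 ∈ Icc (φ b) (φ a))
    have := h c (hs.out ha hb hc) b hb hc.2 (by linarith) (by linarith)
    linarith
  by_cases hb0 : φ b = 0
  · obtain ⟨c, hc, hφc⟩ := hivt (⟨by linarith, by linarith⟩ : φ a / 2 ∈ Icc (φ b) (φ a))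
    have := h a ha c (hs.out ha hb hc) hc.1 ha0 (by linarith)
    linarith
  exact hlt.not_ge (h a ha b hb hab ha0 hb0)

/-- Continuity is what rules out the junk value `0` that the Bochner integral assigns to
non-integrable functions. -/
theorem monotoneOn_integral_of_continuousOn {W : Type*} [MeasurableSpace W] {μ : Measure W}
    {G : W → ℝ → ℝ} {s : Set ℝ} (hs : s.OrdConnected) (hG : ∀ i, MonotoneOn (G i) s)
    (hcont : ContinuousOn (fun x => ∫ i, G i x ∂μ) s) :
    MonotoneOn (fun x => ∫ i, G i x ∂μ) s :=
  monotoneOn_of_continuousOn_of_le_of_ne_zero hs hcont fun _ ha _ hb hab ha0 hb0 =>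
    integral_mono (.of_integral_ne_zero ha0) (.of_integral_ne_zero hb0) fun i => hG i ha hb hab

theorem continuousOn_intervalIntegral_of_continuousOn_prod {f : ℝ → ℝ → ℝ} {a b c d : ℝ}
    (hab : a ≤ b) (hcd : c ≤ d) (hf : ContinuousOn (uncurry f) (Icc a b ×ˢ Icc c d)) :
    ContinuousOn (fun x => ∫ t in c..d, f x t) (Icc a b) := by
  set F : ℝ → ℝ → ℝ := fun x t => f (projIcc a b hab x) (projIcc c d hcd t)
  have hproj : Continuous fun p : ℝ × ℝ =>
      ((projIcc a b hab p.1 : ℝ), (projIcc c d hcd p.2 : ℝ)) := by fun_prop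
  have hF : Continuous (uncurry F) :=
    hf.comp_continuous hproj fun p => ⟨(projIcc a b hab p.1).2, (projIcc c d hcd p.2).2⟩
  refine (intervalIntegral.continuous_parametric_intervalIntegral_of_continuous' hF c d)
    |>.continuousOn.congr fun x hx => intervalIntegral.integral_congr fun t ht => ?_
  rw [uIcc_of_le hcd] at ht
  simp [F, projIcc_of_mem hab hx, projIcc_of_mem hcd ht]

theorem monotoneOn_intervalIntegral_of_nonneg {g : ℝ → ℝ} {a : ℝ} (hg : ContinuousOn g (Ici a))
    (hg0 : ∀ u ∈ Ici a, 0 ≤ g u) : MonotoneOn (fun s => ∫ u in a..s, g u) (Ici a) :=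
  fun _ hs₁ _ hs₂ h12 => intervalIntegral.integral_mono_interval le_rfl hs₁ h12
    (ae_restrict_of_forall_mem measurableSet_Ioc fun u hu => hg0 u hu.1.le)
    ((hg.mono Icc_subset_Ici_self).intervalIntegrable_of_Icc hs₂)

theorem monotoneOn_intervalIntegral_mul_exp_neg_intervalIntegral {ρ' : ℝ → ℝ} {h : ℝ → ℝ → ℝ}
    {a b : ℝ} (hab : a ≤ b) (hρ' : ContinuousOn ρ' (Icc a b)) (hρ'_nonpos : ∀ z ∈ Icc a b, ρ' z ≤ 0)
    (hh : ContinuousOn (uncurry h) (Icc a b ×ˢ Ici 0))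
    (hh_nonneg : ∀ z ∈ Icc a b, ∀ u ∈ Ici (0 : ℝ), 0 ≤ h z u) :
    MonotoneOn (fun s => ∫ z in a..b, ρ' z * Real.exp (-∫ u in (0 : ℝ)..s, h z u)) (Ici 0) := by
  have hintegrable : ∀ s ∈ Ici (0 : ℝ),
      IntervalIntegrable (fun z => ρ' z * Real.exp (-∫ u in (0 : ℝ)..s, h z u)) volume a b :=
    fun s hs => (hρ'.mul (continuousOn_intervalIntegral_of_continuousOn_prod hab hs
      (hh.mono (prod_mono le_rfl Icc_subset_Ici_self))).neg.rexp).intervalIntegrable_of_Icc hab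
  intro s₁ hs₁ s₂ hs₂ h12
  refine intervalIntegral.integral_mono_on hab (hintegrable s₁ hs₁) (hintegrable s₂ hs₂)
    fun z hz => mul_le_mul_of_nonpos_left ?_ (hρ'_nonpos z hz)
  have hz_cont : ContinuousOn (h z) (Ici 0) :=
    hh.comp (continuousOn_const.prodMk continuousOn_id) fun u hu => ⟨hz, hu⟩
  exact Real.exp_le_exp.2 <| neg_le_neg <|
    monotoneOn_intervalIntegral_of_nonneg hz_cont (hh_nonneg z hz) hs₁ hs₂ h12

theorem stmt_6_general {W : Type*} [MeasurableSpace W] (lam : Measure W)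
    (w : W → ℝ → ℝ → ℝ)
    (hw_nonneg : ∀ i y t, 0 ≤ w i y t)
    (hw_cont : ∀ i, Continuous fun p : ℝ × ℝ => w i p.1 p.2)
    (ρy : W → ℝ → ℝ)
    (hρy_cont : ∀ i, Continuous (ρy i))
    (hρy_nonpos : ∀ i, ∀ y ∈ Icc (0:ℝ) 1, ρy i y ≤ 0)
    (f ft : ℝ → ℝ → ℝ)
    (hf_cont : ContinuousOn (fun p : ℝ × ℝ => f p.1 p.2) (Icc 0 1 ×ˢ Ici 0))
    (hft : ∀ y ∈ Icc (0:ℝ) 1, ∀ t ∈ Ici (0:ℝ),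
      HasDerivAt (fun t => f y t) (ft y t) t)
    (hf_eq : ∀ y ∈ Icc (0:ℝ) 1, ∀ t ∈ Ici (0:ℝ),
      f y t = 1 + ∫ i, (∫ z in y..(1:ℝ), ρy i z *
        Real.exp (-∫ s in (0:ℝ)..t, w i (f z s) s)) ∂lam) :
    ∀ y ∈ Icc (0:ℝ) 1, ∀ t ∈ Ici (0:ℝ), 0 ≤ ft y t := by
  intro y hy t ht
  have hsub : Icc y 1 ⊆ Icc (0 : ℝ) 1 := Icc_subset_Icc_left hy.1
  have hfy_cont : ContinuousOn (f y) (Ici 0) :=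
    hf_cont.comp (continuousOn_const.prodMk continuousOn_id) fun s hs => ⟨hy, hs⟩
  have hinner_mono : ∀ i, MonotoneOn (fun s => ∫ z in y..(1:ℝ), ρy i z *
      Real.exp (-∫ u in (0:ℝ)..s, w i (f z u) u)) (Ici 0) := fun i =>
    monotoneOn_intervalIntegral_mul_exp_neg_intervalIntegral hy.2 (hρy_cont i).continuousOn
      (fun z hz => hρy_nonpos i z (hsub hz))
      ((hw_cont i).comp_continuousOn ((hf_cont.mono (prod_mono hsub le_rfl)).prodMk
        continuousOn_snd))
      fun _ _ _ _ => hw_nonneg i _ _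
  have hf_eq_y : EqOn (f y) (fun s => 1 + ∫ i, (∫ z in y..(1:ℝ), ρy i z *
      Real.exp (-∫ u in (0:ℝ)..s, w i (f z u) u)) ∂lam) (Ici 0) := hf_eq y hy
  have hintegral_mono := monotoneOn_integral_of_continuousOn (μ := lam) ordConnected_Ici
    hinner_mono <| (hfy_cont.sub (continuousOn_const (c := 1))).congr fun s hs => by
      simp [hf_eq_y hs]
  have hfy_mono : MonotoneOn (f y) (Ici 0) :=
    (hintegral_mono.const_add 1).congr hf_eq_y.symm
  have hacc : AccPt t (Filter.principal (Ici 0)) := by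
    refine AccPt.mono ?_ (Filter.principal_mono.2 (Ioi_subset_Ici ht))
    rw [accPt_principal_iff_nhdsWithin, sdiff_singleton_eq_self self_notMem_Ioi]
    infer_instance
  exact (hft y hy t ht).hasDerivWithinAt.nonneg_of_monotoneOn hacc hfy_mono

theorem stmt_6 {W : Type*} [MeasurableSpace W] (lam : Measure W)
    [IsProbabilityMeasure lam]
    (w : W → ℝ → ℝ → ℝ)
    (hw_nonneg : ∀ i y t, 0 ≤ w i y t)
    (hw_cont : ∀ i, Continuous fun p : ℝ × ℝ => w i p.1 p.2)
    (ρ ρy : W → ℝ → ℝ)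
    (hρ_deriv : ∀ i y, HasDerivAt (ρ i) (ρy i y) y)
    (hρy_cont : ∀ i, Continuous (ρy i))
    (hρy_nonpos : ∀ i, ∀ y ∈ Icc (0:ℝ) 1, ρy i y ≤ 0)
    (hρ0 : ∀ i, ρ i 0 = 1) (hρ1 : ∀ i, ρ i 1 = 0)
    (hmass : ∀ y ∈ Icc (0:ℝ) 1, ∫ i, ρ i y ∂lam = 1 - y)
    (f ft : ℝ → ℝ → ℝ)
    (hf_cont : ContinuousOn (fun p : ℝ × ℝ => f p.1 p.2) (Icc 0 1 ×ˢ Ici 0))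
    (hf_range : ∀ y ∈ Icc (0:ℝ) 1, ∀ t ∈ Ici (0:ℝ), f y t ∈ Icc (0:ℝ) 1)
    (hft : ∀ y ∈ Icc (0:ℝ) 1, ∀ t ∈ Ici (0:ℝ),
      HasDerivAt (fun t => f y t) (ft y t) t)
    (hf_eq : ∀ y ∈ Icc (0:ℝ) 1, ∀ t ∈ Ici (0:ℝ),
      f y t = 1 + ∫ i, (∫ z in y..(1:ℝ), ρy i z *
        Real.exp (-∫ s in (0:ℝ)..t, w i (f z s) s)) ∂lam) :
    ∀ y ∈ Icc (0:ℝ) 1, ∀ t ∈ Ici (0:ℝ), 0 ≤ ft y t :=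
  stmt_6_general lam w hw_nonneg hw_cont ρy hρy_cont hρy_nonpos f ft hf_cont hft hf_eq
end

section
/- Suppose f⁽¹⁾, f⁽²⁾ : [0,1]×[0,∞) → [0,1] are continuous, satisfy f⁽ⁱ⁾(y,0) = y, and satisfy the inequality |f⁽¹⁾(y,t) − f⁽²⁾(y,t)| ≤ R ∫_y^1 ∫_0^t |f⁽¹⁾(z,s) − f⁽²⁾(z,s)| ds dz for all y ∈ [0,1], t ∈ [0,T], for some constant R > 0. Then f⁽¹⁾ = f⁽²⁾ on [0,1]×[0,T]. -/
open Set

theorem stmt_7 (T R : ℝ) (hT : 0 < T) (hR : 0 < R)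
    (f₁ f₂ : ℝ → ℝ → ℝ)
    (h₁c : ContinuousOn (fun p : ℝ × ℝ => f₁ p.1 p.2) (Icc 0 1 ×ˢ Ici 0))
    (h₂c : ContinuousOn (fun p : ℝ × ℝ => f₂ p.1 p.2) (Icc 0 1 ×ˢ Ici 0))
    (h₁r : ∀ y ∈ Icc (0:ℝ) 1, ∀ t ∈ Ici (0:ℝ), f₁ y t ∈ Icc (0:ℝ) 1)
    (h₂r : ∀ y ∈ Icc (0:ℝ) 1, ∀ t ∈ Ici (0:ℝ), f₂ y t ∈ Icc (0:ℝ) 1)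
    (h₁0 : ∀ y ∈ Icc (0:ℝ) 1, f₁ y 0 = y)
    (h₂0 : ∀ y ∈ Icc (0:ℝ) 1, f₂ y 0 = y)
    (hineq : ∀ y ∈ Icc (0:ℝ) 1, ∀ t ∈ Icc (0:ℝ) T,
      |f₁ y t - f₂ y t| ≤ R * ∫ z in y..(1:ℝ), ∫ s in (0:ℝ)..t, |f₁ z s - f₂ z s|) :
    ∀ y ∈ Icc (0:ℝ) 1, ∀ t ∈ Icc (0:ℝ) T, f₁ y t = f₂ y t := by
  have hDc : ContinuousOn (fun p : ℝ × ℝ => |f₁ p.1 p.2 - f₂ p.1 p.2|)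
      (Icc 0 1 ×ˢ Ici 0) := (h₁c.sub h₂c).abs
  have key : ∀ n : ℕ, ∀ y ∈ Icc (0:ℝ) 1, ∀ t ∈ Icc (0:ℝ) T,
      |f₁ y t - f₂ y t| ≤ (R * t) ^ n / n.factorial := by
    intro n
    induction n with
    | zero =>
      intro y hy t ht
      simp only [pow_zero, Nat.factorial_zero, Nat.cast_one, div_one]
      have h1 := h₁r y hy t ht.1
      have h2 := h₂r y hy t ht.1
      rw [abs_sub_le_iff]
      constructor <;> linarith [h1.1, h1.2, h2.1, h2.2]
    | succ n ih =>
      intro y hy t ht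
      have ht0 : (0:ℝ) ≤ t := ht.1
      set C : ℝ := R ^ n * (t ^ (n+1) / (n+1)) / n.factorial with hC
      have hCnonneg : 0 ≤ C := by
        apply div_nonneg _ (Nat.cast_nonneg _)
        exact mul_nonneg (pow_nonneg hR.le _)
          (div_nonneg (pow_nonneg ht0 _) (by positivity))
      -- bound on the inner integral
      have inner_bound : ∀ z ∈ Icc (0:ℝ) 1,
          abs (∫ s in (0:ℝ)..t, |f₁ z s - f₂ z s|) ≤ C := by
        intro z hz
        have hcont : ContinuousOn (fun s : ℝ => |f₁ z s - f₂ z s|) (Icc 0 t) := by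
          have hmap : MapsTo (fun s : ℝ => ((z, s) : ℝ × ℝ)) (Icc 0 t)
              (Icc 0 1 ×ˢ Ici 0) := fun s hs => ⟨hz, hs.1⟩
          exact hDc.comp (Continuous.continuousOn (continuous_const.prodMk continuous_id)) hmap
        have hint1 : IntervalIntegrable (fun s : ℝ => |f₁ z s - f₂ z s|)
            MeasureTheory.volume 0 t := by
          apply ContinuousOn.intervalIntegrable
          rwa [uIcc_of_le ht0]
        have hint2 : IntervalIntegrable (fun s : ℝ => (R * s) ^ n / n.factorial)
            MeasureTheory.volume 0 t := by
          exact Continuous.intervalIntegrable (((continuous_const.mul continuous_id).pow n).div_const _) 0 t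
        have hmono : (∫ s in (0:ℝ)..t, |f₁ z s - f₂ z s|)
            ≤ ∫ s in (0:ℝ)..t, (R * s) ^ n / n.factorial := by
          apply intervalIntegral.integral_mono_on ht0 hint1 hint2
          intro s hs
          exact ih z hz s ⟨hs.1, le_trans hs.2 ht.2⟩
        have hval : (∫ s in (0:ℝ)..t, (R * s) ^ n / n.factorial) = C := by
          simp only [mul_pow]
          rw [intervalIntegral.integral_div, intervalIntegral.integral_const_mul,
            integral_pow]
          simp [hC]
        have hnn : 0 ≤ ∫ s in (0:ℝ)..t, |f₁ z s - f₂ z s| :=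
          intervalIntegral.integral_nonneg ht0 (fun s _ => abs_nonneg _)
        rw [abs_of_nonneg hnn]
        rw [hval] at hmono
        exact hmono
      have hy1 : y ≤ 1 := hy.2
      have houter : abs (∫ z in y..(1:ℝ), ∫ s in (0:ℝ)..t, |f₁ z s - f₂ z s|)
          ≤ C * |1 - y| := by
        rw [← Real.norm_eq_abs]
        apply intervalIntegral.norm_integral_le_of_norm_le_const
        intro z hz
        rw [Real.norm_eq_abs]
        rw [uIoc_of_le hy1] at hz
        exact inner_bound z ⟨le_trans hy.1 hz.1.le, hz.2⟩
      have h1y : |1 - y| ≤ 1 := by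
        rw [abs_of_nonneg (by linarith)]; linarith [hy.1]
      calc |f₁ y t - f₂ y t|
          ≤ R * ∫ z in y..(1:ℝ), ∫ s in (0:ℝ)..t, |f₁ z s - f₂ z s| :=
            hineq y hy t ht
        _ ≤ R * (C * |1 - y|) := by
            apply mul_le_mul_of_nonneg_left _ hR.le
            exact le_trans (le_abs_self _) houter
        _ ≤ R * C := by
            apply mul_le_mul_of_nonneg_left _ hR.le
            nlinarith [abs_nonneg (1 - y)]
        _ = (R * t) ^ (n+1) / (n+1).factorial := by
            rw [hC, Nat.factorial_succ]
            push_cast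
            field_simp
            ring
  intro y hy t ht
  have h0 : Filter.Tendsto (fun n : ℕ => (R * t) ^ n / n.factorial)
      Filter.atTop (nhds 0) := FloorSemiring.tendsto_pow_div_factorial_atTop (R * t)
  have hle : |f₁ y t - f₂ y t| ≤ 0 :=
    ge_of_tendsto' h0 (fun n => key n y hy t ht)
  have := abs_nonneg (f₁ y t - f₂ y t)
  have : |f₁ y t - f₂ y t| = 0 := le_antisymm hle this
  have := abs_eq_zero.mp this
  linarith
end

section
/- Let η : [0,T] → [0,∞) be continuous and satisfy η(t) = ∫_0^t η(u) a(u,t) exp(−∫_u^t a(u,v) dv) du + b(t) for all t ∈ [0,T], where a : {0 ≤ u ≤ v ≤ T} → [0,∞) is continuous and b(t) = −∫_0^1 ρ'(z) c(z,t) exp(−∫_0^t c(z,v) dv) dz with ρ : [0,1] → [0,1] C¹ nonincreasing, ρ(0)=1, ρ(1)=0, and c : [0,1]×[0,T] → [0,∞) continuous. Then for all t ∈ [0,T]: ∫_0^t η(u) exp(−∫_u^t a(u,v) dv) du = 1 + ∫_0^1 ρ'(z) exp(−∫_0^t c(z,s) ds) dz. -/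
/-!
Integrate the balance equation for `η` over `[0, t]` and apply Fubini: on the triangle
`0 ≤ u ≤ s ≤ t` for the boundary term, on the rectangle `[0, 1] × [0, t]` for the initial term.
The inner integrals have the form `∫ k(s) exp(-∫ k) ds`, exact derivatives of `-exp(-∫ k)`, so the
double integrals equal `∫ η(u) (1 - exp(-∫_u^t a(u, v) dv)) du` and
`∫ ρ'(z) (1 - exp(-∫_0^t c(z, v) dv)) dz`. The term `∫ η` cancels and `∫ ρ' = ρ 1 - ρ 0 = -1`.
Since `η` and `a` are only continuous on `[0, T]` and on the triangle, they are first extended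
by Tietze's theorem.
-/

open Set MeasureTheory intervalIntegral

theorem ContinuousOn.exists_continuous_eqOn {X : Type*} [TopologicalSpace X] [NormalSpace X]
    {s : Set X} (hs : IsClosed s) {f : X → ℝ} (hf : ContinuousOn f s) :
    ∃ g : X → ℝ, Continuous g ∧ EqOn g f s := by
  obtain ⟨g, hg⟩ := ContinuousMap.exists_restrict_eq hs ⟨s.domRestrict f, hf.domRestrict⟩
  exact ⟨g, g.continuous, fun x hx => congr($hg ⟨x, hx⟩)⟩

theorem intervalIntegrable_deriv_of_nonpos {f f' : ℝ → ℝ} {a b : ℝ} (hab : a ≤ b)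
    (hf : ∀ z ∈ Icc a b, HasDerivAt f (f' z) z) (hf' : ∀ z ∈ Icc a b, f' z ≤ 0) :
    IntervalIntegrable f' volume a b := by
  rw [← uIcc_of_le hab] at hf
  have hneg := intervalIntegrable_deriv_of_nonneg (g := fun z => -f z) (g' := -f')
    (fun z hz => (hf z hz).continuousAt.continuousWithinAt.neg)
    (fun z hz => (hf z (Ioo_subset_Icc_self hz)).neg)
    (fun z hz => neg_nonneg.2 (hf' z (by simpa [hab] using Ioo_subset_Icc_self hz)))
  simpa only [neg_neg] using hneg.neg

theorem integral_congr_triangle {T s : ℝ} (hs : s ∈ Icc 0 T) {η₁ η : ℝ → ℝ}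
    {a₁ a : ℝ → ℝ → ℝ} (hη : EqOn η₁ η (Icc 0 T))
    (ha : ∀ u v, 0 ≤ u → u ≤ v → v ≤ T → a₁ u v = a u v) (F : ℝ → ℝ → ℝ → ℝ) :
    ∫ u in (0:ℝ)..s, F (η₁ u) (a₁ u s) (∫ v in u..s, a₁ u v)
      = ∫ u in (0:ℝ)..s, F (η u) (a u s) (∫ v in u..s, a u v) := by
  refine integral_congr fun u hu => ?_
  rw [uIcc_of_le hs.1] at hu
  have hsurv : ∫ v in u..s, a₁ u v = ∫ v in u..s, a u v := by
    refine integral_congr fun v hv => ?_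
    rw [uIcc_of_le hu.2] at hv
    exact ha u v hu.1 hv.1 (hv.2.trans hs.2)
  rw [hη ⟨hu.1, hu.2.trans hs.2⟩, ha u s hu.1 hu.2 hs.2, hsurv]

theorem integral_mul_exp_neg_integral {k : ℝ → ℝ} (hk : Continuous k) (a b : ℝ) :
    ∫ s in a..b, k s * Real.exp (-∫ v in a..s, k v) = 1 - Real.exp (-∫ v in a..b, k v) := by
  have hK : ∀ s, HasDerivAt (fun x => ∫ v in a..x, k v) (k s) s := fun s =>
    integral_hasDerivAt_right (hk.intervalIntegrable _ _)
      hk.stronglyMeasurable.stronglyMeasurableAtFilter hk.continuousAt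
  have hderiv : ∀ s, HasDerivAt (fun x => -Real.exp (-∫ v in a..x, k v))
      (k s * Real.exp (-∫ v in a..s, k v)) s := fun s => by
    have h : HasDerivAt (fun x => -Real.exp (-∫ v in a..x, k v))
        (-(Real.exp (-∫ v in a..s, k v) * -k s)) s := (hK s).neg.exp.neg
    convert h using 1
    ring
  have hcont : Continuous fun s => k s * Real.exp (-∫ v in a..s, k v) :=
    hk.mul (continuous_iff_continuousAt.2 fun s => (hK s).continuousAt).neg.rexp
  rw [integral_eq_sub_of_hasDerivAt (fun s _ => hderiv s) (hcont.intervalIntegrable _ _)]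
  simp only [integral_same, neg_zero, Real.exp_zero]
  ring

theorem continuous_intervalIntegral_fst_snd {k : ℝ → ℝ → ℝ}
    (hk : Continuous fun p : ℝ × ℝ => k p.1 p.2) :
    Continuous fun p : ℝ × ℝ => ∫ v in p.1..p.2, k p.1 v := by
  have hprim : ∀ {σ : ℝ × ℝ → ℝ}, Continuous σ →
      Continuous fun p : ℝ × ℝ => ∫ v in (0:ℝ)..σ p, k p.1 v := fun hσ =>
    continuous_parametric_intervalIntegral_of_continuous
      (f := fun (p : ℝ × ℝ) (v : ℝ) => k p.1 v)
      (show Continuous fun q : (ℝ × ℝ) × ℝ => k q.1.1 q.2 from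
        hk.comp (continuous_fst.fst.prodMk continuous_snd)) hσ
  have hk₁ : ∀ u, Continuous (k u) := fun u => hk.comp (continuous_const.prodMk continuous_id)
  have hsplit : (fun p : ℝ × ℝ => ∫ v in p.1..p.2, k p.1 v)
      = fun p => (∫ v in (0:ℝ)..p.2, k p.1 v) - ∫ v in (0:ℝ)..p.1, k p.1 v :=
    funext fun p => (integral_interval_sub_left ((hk₁ _).intervalIntegrable _ _)
      ((hk₁ _).intervalIntegrable _ _)).symm
  rw [hsplit]
  exact (hprim continuous_snd).sub (hprim continuous_fst)

theorem integral_integral_swap_triangle {a b : ℝ} (hab : a ≤ b) {H : ℝ → ℝ → ℝ}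
    (hH : Continuous fun p : ℝ × ℝ => H p.1 p.2) :
    ∫ u in a..b, ∫ s in u..b, H u s = ∫ s in a..b, ∫ u in a..s, H u s := by
  let μ := volume.restrict (Ioc a b)
  let G : ℝ → ℝ → ℝ := fun u s => {p : ℝ × ℝ | p.1 ≤ p.2}.indicator (fun p => H p.1 p.2) (u, s)
  have hG : Integrable (Function.uncurry G) (μ.prod μ) := by
    rw [Measure.prod_restrict, ← Measure.volume_eq_prod]
    exact ((hH.continuousOn.integrableOn_compact (isCompact_Icc.prod isCompact_Icc)).mono_set
      (prod_mono Ioc_subset_Icc_self Ioc_subset_Icc_self)).indicator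
      (isClosed_le continuous_fst continuous_snd).measurableSet
  have hleft : ∀ u ∈ Ioc a b, ∫ s in Ioc a b, G u s = ∫ s in u..b, H u s := by
    intro u hu
    have hGu : G u = (Ici u).indicator (H u) := by
      ext s; simp only [G, indicator_apply, mem_ofPred_eq, mem_Ici]
    rw [hGu, setIntegral_indicator measurableSet_Ici, integral_of_le hu.2,
      ← integral_Icc_eq_integral_Ioc]
    have hset : Ioc a b ∩ Ici u = Icc u b := by
      ext s
      simp only [mem_inter_iff, mem_Ioc, mem_Ici, mem_Icc]
      constructor
      · rintro ⟨⟨-, h⟩, h'⟩; exact ⟨h', h⟩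
      · rintro ⟨h', h⟩; exact ⟨⟨hu.1.trans_le h', h⟩, h'⟩
    rw [hset]
  have hright : ∀ s ∈ Ioc a b, ∫ u in Ioc a b, G u s = ∫ u in a..s, H u s := by
    intro s hs
    have hGs : (fun u => G u s) = (Iic s).indicator (fun u => H u s) := by
      ext u; simp only [G, indicator_apply, mem_ofPred_eq, mem_Iic]
    rw [hGs, setIntegral_indicator measurableSet_Iic, integral_of_le hs.1.le,
      Ioc_inter_Iic, min_eq_right hs.2]
  calc ∫ u in a..b, ∫ s in u..b, H u s
      = ∫ u in Ioc a b, ∫ s in Ioc a b, G u s := by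
        rw [integral_of_le hab]
        exact setIntegral_congr_fun measurableSet_Ioc fun u hu => (hleft u hu).symm
    _ = ∫ s in Ioc a b, ∫ u in Ioc a b, G u s := integral_integral_swap hG
    _ = ∫ s in a..b, ∫ u in a..s, H u s := by
        rw [integral_of_le hab]
        exact setIntegral_congr_fun measurableSet_Ioc hright

theorem integral_integral_swap_mul {a b c d : ℝ} (hab : a ≤ b) (hcd : c ≤ d) {φ : ℝ → ℝ}
    (hφ : IntervalIntegrable φ volume a b) {k : ℝ → ℝ → ℝ}
    (hk : Continuous fun p : ℝ × ℝ => k p.1 p.2) :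
    ∫ s in c..d, ∫ z in a..b, φ z * k z s = ∫ z in a..b, φ z * ∫ s in c..d, k z s := by
  obtain ⟨M, hM⟩ := (isCompact_Icc.prod isCompact_Icc).exists_bound_of_continuousOn
    (s := Icc a b ×ˢ Icc c d) hk.continuousOn
  set μ := volume.restrict (Ioc a b)
  set ν := volume.restrict (Ioc c d)
  have hint : Integrable (Function.uncurry fun z s => φ z * k z s) (μ.prod ν) := by
    have hdom : Integrable (fun p : ℝ × ℝ => ‖φ p.1‖ * M) (μ.prod ν) :=
      hφ.1.norm.mul_prod (integrable_const M)
    refine hdom.mono' (hφ.1.aestronglyMeasurable.comp_fst.mul hk.aestronglyMeasurable) ?_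
    rw [Measure.prod_restrict]
    refine ae_restrict_of_forall_mem (measurableSet_Ioc.prod measurableSet_Ioc) ?_
    rintro ⟨z, s⟩ ⟨hz, hs⟩
    rw [Function.uncurry_apply_pair, norm_mul]
    exact mul_le_mul_of_nonneg_left (hM _ ⟨Ioc_subset_Icc_self hz, Ioc_subset_Icc_self hs⟩)
      (norm_nonneg _)
  rw [integral_of_le hab, integral_of_le hcd]
  calc ∫ s in Ioc c d, ∫ z in a..b, φ z * k z s
      = ∫ s in Ioc c d, ∫ z in Ioc a b, φ z * k z s :=
        setIntegral_congr_fun measurableSet_Ioc fun s _ => integral_of_le hab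
    _ = ∫ z in Ioc a b, ∫ s in Ioc c d, φ z * k z s := (integral_integral_swap hint).symm
    _ = ∫ z in Ioc a b, φ z * ∫ s in c..d, k z s :=
        setIntegral_congr_fun measurableSet_Ioc fun z _ => by
          rw [integral_of_le hcd, MeasureTheory.integral_const_mul]

theorem integral_integral_mul_exp_neg_triangle {t₀ t : ℝ} (ht : t₀ ≤ t) {η : ℝ → ℝ}
    (hη : Continuous η) {k : ℝ → ℝ → ℝ} (hk : Continuous fun p : ℝ × ℝ => k p.1 p.2) :
    ∫ s in t₀..t, ∫ u in t₀..s, η u * k u s * Real.exp (-∫ v in u..s, k u v)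
      = (∫ u in t₀..t, η u) - ∫ u in t₀..t, η u * Real.exp (-∫ v in u..t, k u v) := by
  have hK := continuous_intervalIntegral_fst_snd hk
  have hk₁ : ∀ u, Continuous (k u) := fun u => hk.comp (continuous_const.prodMk continuous_id)
  have hE : Continuous fun u => η u * Real.exp (-∫ v in u..t, k u v) :=
    hη.mul (hK.comp (continuous_id.prodMk continuous_const)).neg.rexp
  rw [← integral_integral_swap_triangle ht ((hη.comp continuous_fst).mul hk |>.mul hK.neg.rexp),
    ← integral_sub (hη.intervalIntegrable _ _) (hE.intervalIntegrable _ _)]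
  refine integral_congr fun u _ => ?_
  simp only [mul_assoc]
  rw [intervalIntegral.integral_const_mul, integral_mul_exp_neg_integral (hk₁ u)]
  ring

theorem integral_integral_mul_exp_neg_rect {a b t₀ t : ℝ} (hab : a ≤ b) (ht : t₀ ≤ t)
    {φ : ℝ → ℝ} (hφ : IntervalIntegrable φ volume a b) {k : ℝ → ℝ → ℝ}
    (hk : Continuous fun p : ℝ × ℝ => k p.1 p.2) :
    ∫ s in t₀..t, ∫ z in a..b, φ z * k z s * Real.exp (-∫ v in t₀..s, k z v)
      = (∫ z in a..b, φ z) - ∫ z in a..b, φ z * Real.exp (-∫ v in t₀..t, k z v) := by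
  have hk₁ : ∀ z, Continuous (k z) := fun z => hk.comp (continuous_const.prodMk continuous_id)
  have hK : Continuous fun p : ℝ × ℝ => k p.1 p.2 * Real.exp (-∫ v in t₀..p.2, k p.1 v) :=
    hk.mul (continuous_parametric_primitive_of_continuous hk).neg.rexp
  have hE : Continuous fun z => Real.exp (-∫ v in t₀..t, k z v) :=
    (continuous_parametric_intervalIntegral_of_continuous' hk t₀ t).neg.rexp
  simp only [mul_assoc]
  rw [integral_integral_swap_mul hab ht hφ hK,
    ← integral_sub hφ (hφ.mul_continuousOn hE.continuousOn)]
  refine integral_congr fun z _ => ?_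
  rw [integral_mul_exp_neg_integral (hk₁ z)]
  ring

theorem mass_balance_of_continuous {t : ℝ} (ht : 0 ≤ t) {η : ℝ → ℝ} (hη : Continuous η)
    {a : ℝ → ℝ → ℝ} (ha : Continuous fun p : ℝ × ℝ => a p.1 p.2) {ρ' : ℝ → ℝ}
    (hρ' : IntervalIntegrable ρ' volume 0 1) (hρ'_total : ∫ z in (0:ℝ)..1, ρ' z = -1)
    {c : ℝ → ℝ → ℝ} (hc : Continuous fun p : ℝ × ℝ => c p.1 p.2)
    (heq : ∀ s ∈ Icc 0 t,
      η s = (∫ u in (0:ℝ)..s, η u * a u s * Real.exp (-∫ v in u..s, a u v))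
        - ∫ z in (0:ℝ)..1, ρ' z * c z s * Real.exp (-∫ v in (0:ℝ)..s, c z v)) :
    (∫ u in (0:ℝ)..t, η u * Real.exp (-∫ v in u..t, a u v))
      = 1 + ∫ z in (0:ℝ)..1, ρ' z * Real.exp (-∫ s in (0:ℝ)..t, c z s) := by
  set A := fun s => ∫ u in (0:ℝ)..s, η u * a u s * Real.exp (-∫ v in u..s, a u v)
  set B := fun s => ∫ z in (0:ℝ)..1, ρ' z * c z s * Real.exp (-∫ v in (0:ℝ)..s, c z v)
  have hAB : ∀ s ∈ Icc 0 t, η s = A s - B s := heq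
  have hA : Continuous A :=
    continuous_parametric_intervalIntegral_of_continuous
      (f := fun s u => η u * a u s * Real.exp (-∫ v in u..s, a u v))
      ((hη.comp continuous_snd).mul (ha.comp continuous_swap) |>.mul
        ((continuous_intervalIntegral_fst_snd ha).comp continuous_swap).neg.rexp) continuous_id
  -- `ρ'` is merely integrable, so continuity of `B` comes from `B = A - η` on `[0, t]`.
  have hB : ContinuousOn B (Icc 0 t) :=
    (hA.continuousOn.sub hη.continuousOn).congr fun s hs => by
      simp only [Pi.sub_apply, hAB s hs]; ring
  have hbalance : ∫ s in (0:ℝ)..t, η s = (∫ s in (0:ℝ)..t, A s) - ∫ s in (0:ℝ)..t, B s := by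
    rw [← integral_sub (hA.intervalIntegrable _ _) (hB.intervalIntegrable_of_Icc ht)]
    exact integral_congr fun s hs => hAB s (uIcc_of_le ht ▸ hs)
  rw [integral_integral_mul_exp_neg_triangle ht hη ha,
    integral_integral_mul_exp_neg_rect zero_le_one ht hρ' hc, hρ'_total] at hbalance
  linarith

theorem stmt_9_general (T : ℝ)
    (η : ℝ → ℝ) (hηc : ContinuousOn η (Icc 0 T))
    (a : ℝ → ℝ → ℝ)
    (hac : ContinuousOn (fun p : ℝ × ℝ => a p.1 p.2)
      {p : ℝ × ℝ | 0 ≤ p.1 ∧ p.1 ≤ p.2 ∧ p.2 ≤ T})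
    (ρ ρ' : ℝ → ℝ)
    (hρd : ∀ z ∈ Icc (0:ℝ) 1, HasDerivAt ρ (ρ' z) z)
    (hρ'np : ∀ z ∈ Icc (0:ℝ) 1, ρ' z ≤ 0)
    (hρ0 : ρ 0 = 1) (hρ1 : ρ 1 = 0)
    (c : ℝ → ℝ → ℝ) (hcc : Continuous fun p : ℝ × ℝ => c p.1 p.2)
    (heq : ∀ t ∈ Icc (0:ℝ) T,
      η t = (∫ u in (0:ℝ)..t, η u * a u t * Real.exp (-∫ v in u..t, a u v))
        - ∫ z in (0:ℝ)..1, ρ' z * c z t * Real.exp (-∫ v in (0:ℝ)..t, c z v)) :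
    ∀ t ∈ Icc (0:ℝ) T,
      (∫ u in (0:ℝ)..t, η u * Real.exp (-∫ v in u..t, a u v))
        = 1 + ∫ z in (0:ℝ)..1, ρ' z * Real.exp (-∫ s in (0:ℝ)..t, c z s) := by
  rintro t ⟨ht0, htT⟩
  obtain ⟨η₁, hη₁, hη₁_eq⟩ := hηc.exists_continuous_eqOn isClosed_Icc
  obtain ⟨a₁, ha₁, ha₁_eq⟩ := hac.exists_continuous_eqOn
    ((isClosed_le continuous_const continuous_fst).inter
      ((isClosed_le continuous_fst continuous_snd).inter
        (isClosed_le continuous_snd continuous_const)))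
  have hρ' := intervalIntegrable_deriv_of_nonpos zero_le_one hρd hρ'np
  have hρ'_total : ∫ z in (0:ℝ)..1, ρ' z = -1 := by
    rw [integral_eq_sub_of_hasDerivAt
      (fun z hz => hρd z (by rwa [uIcc_of_le zero_le_one] at hz)) hρ', hρ0, hρ1]
    norm_num
  have ha₁_eq' : ∀ u v, 0 ≤ u → u ≤ v → v ≤ T → a₁ (u, v) = a u v :=
    fun u v hu huv hv => ha₁_eq ⟨hu, huv, hv⟩
  rw [← integral_congr_triangle ⟨ht0, htT⟩ hη₁_eq ha₁_eq' fun x _ I => x * Real.exp (-I)]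
  refine mass_balance_of_continuous ht0 hη₁ ha₁ hρ' hρ'_total hcc fun s hs => ?_
  have hsT : s ∈ Icc 0 T := ⟨hs.1, hs.2.trans htT⟩
  rw [hη₁_eq hsT, heq s hsT]
  congr 1
  exact (integral_congr_triangle hsT hη₁_eq ha₁_eq' fun x y I => x * y * Real.exp (-I)).symm

theorem stmt_9 (T : ℝ) (hT : 0 < T)
    (η : ℝ → ℝ) (hηc : ContinuousOn η (Icc 0 T))
    (hηn : ∀ t ∈ Icc (0:ℝ) T, 0 ≤ η t)
    (a : ℝ → ℝ → ℝ)
    (hac : ContinuousOn (fun p : ℝ × ℝ => a p.1 p.2)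
      {p : ℝ × ℝ | 0 ≤ p.1 ∧ p.1 ≤ p.2 ∧ p.2 ≤ T})
    (han : ∀ u v : ℝ, 0 ≤ u → u ≤ v → v ≤ T → 0 ≤ a u v)
    (ρ ρ' : ℝ → ℝ)
    (hρd : ∀ z ∈ Icc (0:ℝ) 1, HasDerivAt ρ (ρ' z) z)
    (hρ'np : ∀ z ∈ Icc (0:ℝ) 1, ρ' z ≤ 0)
    (hρ0 : ρ 0 = 1) (hρ1 : ρ 1 = 0)
    (hρr : ∀ z ∈ Icc (0:ℝ) 1, ρ z ∈ Icc (0:ℝ) 1)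
    (c : ℝ → ℝ → ℝ) (hcc : Continuous fun p : ℝ × ℝ => c p.1 p.2)
    (hcn : ∀ z t, 0 ≤ c z t)
    (heq : ∀ t ∈ Icc (0:ℝ) T,
      η t = (∫ u in (0:ℝ)..t, η u * a u t * Real.exp (-∫ v in u..t, a u v))
        - ∫ z in (0:ℝ)..1, ρ' z * c z t * Real.exp (-∫ v in (0:ℝ)..t, c z v)) :
    ∀ t ∈ Icc (0:ℝ) T,
      (∫ u in (0:ℝ)..t, η u * Real.exp (-∫ v in u..t, a u v))
        = 1 + ∫ z in (0:ℝ)..1, ρ' z * Real.exp (-∫ s in (0:ℝ)..t, c z s) :=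
  stmt_9_general T η hηc a hac ρ ρ' hρd hρ'np hρ0 hρ1 c hcc heq
end

section
/- Let w : [0,1] × [0,T] → [0,∞) be C¹ in the first variable with w and |∂w/∂y| bounded by R on [0,1]×[0,T]. For x, y ∈ [0,1) and t ∈ [0,T], ∫_0^∞ |x·1_{[0,w(x,t))}(ξ) − y·1_{[0,w(y,t))}(ξ)|² dξ ≤ C |x − y| for a constant C depending only on R. -/
open Set MeasureTheory

section IndicatorDifference

variable {a b x y : ℝ}

lemma sq_sub_mul_indicator_Ico_eq (ha : 0 ≤ a) (hab : a ≤ b) (ξ : ℝ) :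
    (x * (Ico (0:ℝ) a).indicator (fun _ => (1:ℝ)) ξ
        - y * (Ico (0:ℝ) b).indicator (fun _ => (1:ℝ)) ξ) ^ 2
      = (Ico (0:ℝ) a).indicator (fun _ => (x - y) ^ 2) ξ
        + (Ico a b).indicator (fun _ => y ^ 2) ξ := by
  by_cases hξa : ξ ∈ Ico 0 a
  · have hξb : ξ ∈ Ico 0 b := ⟨hξa.1, hξa.2.trans_le hab⟩
    have hξab : ξ ∉ Ico a b := fun h => (not_lt.2 h.1) hξa.2
    simp [hξa, hξb, hξab]
  · by_cases hξb : ξ ∈ Ico 0 b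
    · have hξab : ξ ∈ Ico a b := ⟨not_lt.1 fun h => hξa ⟨hξb.1, h⟩, hξb.2⟩
      simp [hξa, hξb, hξab]
    · have hξab : ξ ∉ Ico a b := fun h => hξb ⟨ha.trans h.1, h.2⟩
      simp [hξa, hξb, hξab]

lemma integral_sq_sub_mul_indicator_Ico (ha : 0 ≤ a) (hab : a ≤ b) :
    Integrable (fun ξ => (x * (Ico (0:ℝ) a).indicator (fun _ => (1:ℝ)) ξ
        - y * (Ico (0:ℝ) b).indicator (fun _ => (1:ℝ)) ξ) ^ 2) ∧
    ∫ ξ, (x * (Ico (0:ℝ) a).indicator (fun _ => (1:ℝ)) ξ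
        - y * (Ico (0:ℝ) b).indicator (fun _ => (1:ℝ)) ξ) ^ 2
      = (x - y) ^ 2 * a + y ^ 2 * (b - a) := by
  simp_rw [sq_sub_mul_indicator_Ico_eq ha hab]
  have h₁ : Integrable ((Ico (0:ℝ) a).indicator (fun _ => (x - y) ^ 2)) :=
    (integrableOn_const measure_Ico_lt_top.ne).integrable_indicator measurableSet_Ico
  have h₂ : Integrable ((Ico a b).indicator (fun _ => y ^ 2)) :=
    (integrableOn_const measure_Ico_lt_top.ne).integrable_indicator measurableSet_Ico
  refine ⟨h₁.add h₂, ?_⟩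
  rw [integral_add h₁ h₂, integral_indicator_const _ measurableSet_Ico,
    integral_indicator_const _ measurableSet_Ico]
  simp [ha, sub_nonneg.2 hab, mul_comm]

/-- The square of the difference only differs from `(x - y)²` on an interval of length
`|a - b|`, where it is at most `max x² y² ≤ 1`. -/
lemma setIntegral_Ioi_sq_sub_mul_indicator_Ico_le {R : ℝ} (ha : 0 ≤ a) (hb : 0 ≤ b)
    (haR : a ≤ R) (hbR : b ≤ R) (hx : |x| ≤ 1) (hy : |y| ≤ 1) :
    ∫ ξ in Ioi (0:ℝ), (x * (Ico (0:ℝ) a).indicator (fun _ => (1:ℝ)) ξ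
        - y * (Ico (0:ℝ) b).indicator (fun _ => (1:ℝ)) ξ) ^ 2
      ≤ R * (x - y) ^ 2 + |a - b| := by
  wlog hab : a ≤ b generalizing a b x y
  · have hswap := this hb ha hbR haR hy hx (le_of_not_ge hab)
    simp_rw [sub_sq_comm (x * _), sub_sq_comm x, abs_sub_comm a]
    exact hswap
  obtain ⟨hint, heq⟩ := integral_sq_sub_mul_indicator_Ico (x := x) (y := y) ha hab
  have hy2 : y ^ 2 ≤ 1 := (sq_le_one_iff_abs_le_one y).2 hy
  calc _ ≤ ∫ ξ, (x * (Ico (0:ℝ) a).indicator (fun _ => (1:ℝ)) ξ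
          - y * (Ico (0:ℝ) b).indicator (fun _ => (1:ℝ)) ξ) ^ 2 :=
        setIntegral_le_integral hint (.of_forall fun _ => sq_nonneg _)
    _ = (x - y) ^ 2 * a + y ^ 2 * (b - a) := heq
    _ ≤ R * (x - y) ^ 2 + |a - b| := by
        rw [abs_sub_comm, abs_of_nonneg (sub_nonneg.2 hab)]
        nlinarith [sq_nonneg (x - y), sub_nonneg.2 hab]

end IndicatorDifference

theorem stmt_12_general (T R : ℝ) (hR : 0 < R)
    (w wy : ℝ → ℝ → ℝ)
    (hderiv : ∀ t ∈ Icc (0:ℝ) T, ∀ y : ℝ, HasDerivAt (fun y => w y t) (wy y t) y)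
    (hwn : ∀ y t, 0 ≤ w y t)
    (hbd : ∀ y ∈ Icc (0:ℝ) 1, ∀ t ∈ Icc (0:ℝ) T, w y t ≤ R ∧ |wy y t| ≤ R) :
    ∃ C > (0:ℝ), ∀ x ∈ Ico (0:ℝ) 1, ∀ y ∈ Ico (0:ℝ) 1, ∀ t ∈ Icc (0:ℝ) T,
      (∫ ξ in Ioi (0:ℝ),
        (x * (Ico (0:ℝ) (w x t)).indicator (fun _ => (1:ℝ)) ξ
          - y * (Ico (0:ℝ) (w y t)).indicator (fun _ => (1:ℝ)) ξ) ^ 2)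
        ≤ C * |x - y| := by
  refine ⟨2 * R, by positivity, fun x hx y hy t ht => ?_⟩
  have hxI : x ∈ Icc (0:ℝ) 1 := Ico_subset_Icc_self hx
  have hyI : y ∈ Icc (0:ℝ) 1 := Ico_subset_Icc_self hy
  have hlip : |w x t - w y t| ≤ R * |x - y| := by
    simpa [Real.norm_eq_abs] using (convex_Icc (0:ℝ) 1).norm_image_sub_le_of_norm_hasDerivWithin_le
      (fun z _ => (hderiv t ht z).hasDerivWithinAt) (fun z hz => (hbd z hz t ht).2) hyI hxI
  have hsq : (x - y) ^ 2 ≤ |x - y| := by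
    have : |x - y| ≤ 1 := abs_sub_le_iff.2 ⟨by linarith [hx.2, hy.1], by linarith [hx.1, hy.2]⟩
    nlinarith [sq_abs (x - y), abs_nonneg (x - y)]
  calc _ ≤ R * (x - y) ^ 2 + |w x t - w y t| :=
        setIntegral_Ioi_sq_sub_mul_indicator_Ico_le (hwn x t) (hwn y t) (hbd x hxI t ht).1
          (hbd y hyI t ht).1 (abs_le.2 ⟨by linarith [hx.1], hx.2.le⟩)
          (abs_le.2 ⟨by linarith [hy.1], hy.2.le⟩)
    _ ≤ R * |x - y| + R * |x - y| := by gcongr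
    _ = 2 * R * |x - y| := by ring

theorem stmt_12 (T R : ℝ) (hT : 0 < T) (hR : 0 < R)
    (w wy : ℝ → ℝ → ℝ)
    (hderiv : ∀ t ∈ Icc (0:ℝ) T, ∀ y : ℝ, HasDerivAt (fun y => w y t) (wy y t) y)
    (hwn : ∀ y t, 0 ≤ w y t)
    (hbd : ∀ y ∈ Icc (0:ℝ) 1, ∀ t ∈ Icc (0:ℝ) T, w y t ≤ R ∧ |wy y t| ≤ R) :
    ∃ C > (0:ℝ), ∀ x ∈ Ico (0:ℝ) 1, ∀ y ∈ Ico (0:ℝ) 1, ∀ t ∈ Icc (0:ℝ) T,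
      (∫ ξ in Ioi (0:ℝ),
        (x * (Ico (0:ℝ) (w x t)).indicator (fun _ => (1:ℝ)) ξ
          - y * (Ico (0:ℝ) (w y t)).indicator (fun _ => (1:ℝ)) ξ) ^ 2)
        ≤ C * |x - y| :=
  stmt_12_general T R hR w wy hderiv hwn hbd
end
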